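/- arXiv:2406.01282 — 5 statements merged into one kernel-verified Lean document; each statement's English description precedes it below -/
import Mathlib

section
/- Let κ < 0, let x and y be points of the Poincaré ball of curvature κ with y ≠ x, and let t ∈ (0, 1]. Then exp^κ_x(t · log^κ_x(y)) = x ⊕κ ((−x ⊕κ y) ⊗κ t), i.e. moving from x along the exponential map in the direction t·log^κ_x(y) lands exactly at the Möbius-gyrovector point of parameter t on the geodesic from x to y. -/
open Real Filter

open scoped RealInnerProductSpace

/-- Inverse hyperbolic tangent. -/
noncomputable def artanh (x : ℝ) : ℝ := (1 / 2) * Real.log ((1 + x) / (1 - x))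

variable {E : Type*} [NormedAddCommGroup E] [InnerProductSpace ℝ E]

/-- Möbius (gyrovector) addition on the Poincaré ball of curvature `κ`. -/
noncomputable def mAdd (κ : ℝ) (x y : E) : E :=
  (1 - 2 * κ * ⟪x, y⟫ + κ ^ 2 * ‖x‖ ^ 2 * ‖y‖ ^ 2)⁻¹ •
    ((1 - 2 * κ * ⟪x, y⟫ - κ * ‖y‖ ^ 2) • x + (1 + κ * ‖x‖ ^ 2) • y)

/-- Conformal factor `λκ(x) = 2 / (1 + κ‖x‖²)`. -/
noncomputable def lam (κ : ℝ) (x : E) : ℝ := 2 / (1 + κ * ‖x‖ ^ 2)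

open Classical in
/-- Möbius scalar multiplication `r ⊗κ x`. -/
noncomputable def mSmul (κ r : ℝ) (x : E) : E :=
  if x = 0 then 0
  else ((1 / Real.sqrt (-κ)) * Real.tanh (r * _root_.artanh (Real.sqrt (-κ) * ‖x‖)) * ‖x‖⁻¹) • x

open Classical in
/-- Exponential map of the Poincaré ball at `x` with curvature `κ`. -/
noncomputable def expMap (κ : ℝ) (x v : E) : E :=
  if v = 0 then x
  else mAdd κ x
    ((Real.tanh (Real.sqrt (-κ) * lam κ x * ‖v‖ / 2) / (Real.sqrt (-κ) * ‖v‖)) • v)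

/-- Logarithmic map of the Poincaré ball at `x` with curvature `κ`. -/
noncomputable def logMap (κ : ℝ) (x y : E) : E :=
  ((2 / (Real.sqrt (-κ) * lam κ x)) * _root_.artanh (Real.sqrt (-κ) * ‖mAdd κ (-x) y‖) *
      ‖mAdd κ (-x) y‖⁻¹) • mAdd κ (-x) y

/-- Geodesic distance of the Poincaré ball of curvature `κ`. -/
noncomputable def dK (κ : ℝ) (x y : E) : ℝ :=
  (2 / Real.sqrt (-κ)) * _root_.artanh (Real.sqrt (-κ) * ‖mAdd κ (-x) y‖)

/-- Membership in the Poincaré ball of curvature `κ`: `κ·‖x‖² > −1`. -/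
def inBall (κ : ℝ) (x : E) : Prop := κ * ‖x‖ ^ 2 > -1

/-!
Write `log_x y = s • w` with `w = (-x) ⊕ y`. The exponential map sends any multiple `s • w` to
`x ⊕ (tanh (s · c λ(x) ‖w‖ / 2) / (c ‖w‖)) • w`, the sign of `s` being absorbed by the oddness
of `tanh`. For the multiple `t · s` the `tanh` argument collapses to `t · artanh (c ‖w‖)`, which
is exactly the coefficient of the Möbius scalar multiple `t ⊗ w`.
-/

lemma _root_.artanh_zero : _root_.artanh 0 = 0 := by
  simp [_root_.artanh]

lemma tanh_mul_abs_mul (a s : ℝ) : tanh (|s| * a) * s = tanh (s * a) * |s| := by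
  rcases le_or_gt 0 s with hs | hs
  · rw [abs_of_nonneg hs]
  · rw [abs_of_neg hs, neg_mul, tanh_neg]
    ring

/-- When `c * r = 0` both sides vanish, because `artanh 0 = 0` and division by zero gives zero. -/
lemma two_div_mul_artanh_mul (c l r : ℝ) (hl : l ≠ 0) :
    2 / (c * l) * _root_.artanh (c * r) * r⁻¹ * (c * l * r / 2) = _root_.artanh (c * r) := by
  rcases eq_or_ne (c * r) 0 with hcr | hcr
  · simp [hcr, _root_.artanh_zero]
  · have hc : c ≠ 0 := left_ne_zero_of_mul hcr
    have hr : r ≠ 0 := right_ne_zero_of_mul hcr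
    field_simp

lemma mAdd_zero_right (κ : ℝ) (x : E) : mAdd κ x 0 = x := by
  simp [mAdd]

lemma lam_pos {F : Type*} [NormedAddCommGroup F] {κ : ℝ} {x : F} (hx : inBall κ x) :
    0 < lam κ x := by
  have : 0 < 1 + κ * ‖x‖ ^ 2 := by unfold inBall at hx; linarith
  unfold lam
  positivity

lemma expMap_smul (κ s : ℝ) (x w : E) :
    expMap κ x (s • w) =
      mAdd κ x ((tanh (s * (√(-κ) * lam κ x * ‖w‖ / 2)) / (√(-κ) * ‖w‖)) • w) := by
  rw [expMap]
  split_ifs with hsw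
  · rcases smul_eq_zero.mp hsw with rfl | rfl <;> simp [mAdd_zero_right]
  · have hs : |s| ≠ 0 := abs_ne_zero.mpr (smul_ne_zero_iff.mp hsw).1
    rw [smul_smul, norm_smul, norm_eq_abs]
    congr 2
    rw [show √(-κ) * lam κ x * (|s| * ‖w‖) / 2 = |s| * (√(-κ) * lam κ x * ‖w‖ / 2) by ring,
      div_mul_eq_mul_div, tanh_mul_abs_mul]
    field_simp

theorem exp_smul_log_eq_mobius_geodesic_general
    (κ : ℝ) (x y : E) (hx : inBall κ x)
    (t : ℝ) :
    expMap κ x (t • logMap κ x y) = mAdd κ x (mSmul κ t (mAdd κ (-x) y)) := by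
  rw [logMap, smul_smul, expMap_smul, mul_assoc,
    two_div_mul_artanh_mul _ _ _ (lam_pos hx).ne', mSmul]
  split_ifs with hw
  · simp [hw, mAdd_zero_right]
  · congr 2
    ring

theorem exp_smul_log_eq_mobius_geodesic
    (κ : ℝ) (hκ : κ < 0) (x y : E) (hx : inBall κ x) (hy : inBall κ y) (hxy : y ≠ x)
    (t : ℝ) (ht0 : 0 < t) (ht1 : t ≤ 1) :
    expMap κ x (t • logMap κ x y) = mAdd κ x (mSmul κ t (mAdd κ (-x) y)) :=
  exp_smul_log_eq_mobius_geodesic_general κ x y hx t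
end

section
/- Let κ < 0 and let x, y be points of the Poincaré ball of curvature κ. Then x ⊕κ y is again in the Poincaré ball of curvature κ, i.e. κ·‖x ⊕κ y‖² > −1. -/
open Real Filter

open scoped RealInnerProductSpace

variable {E : Type*} [NormedAddCommGroup E] [InnerProductSpace ℝ E]

/-!
The Möbius sum `x ⊕κ y` is `D⁻¹ • (α • x + β • y)` with `D = 1 - 2κ⟪x, y⟫ + κ²‖x‖²‖y‖²`, and a
polynomial identity in `κ, ‖x‖², ‖y‖², ⟪x, y⟫` gives `(1 + κ‖x ⊕κ y‖²) D = (1 + κ‖x‖²)(1 + κ‖y‖²)`.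
So it suffices that `D > 0`; for `κ < 0`, Cauchy–Schwarz gives `D ≥ (1 + κ‖x‖‖y‖)²`, and
`κ²‖x‖²‖y‖² < 1` on the ball.
-/

noncomputable def mAddDenom (κ : ℝ) (x y : E) : ℝ :=
  1 - 2 * κ * ⟪x, y⟫ + κ ^ 2 * ‖x‖ ^ 2 * ‖y‖ ^ 2

theorem norm_smul_add_smul_sq (a b : ℝ) (x y : E) :
    ‖a • x + b • y‖ ^ 2 = a ^ 2 * ‖x‖ ^ 2 + 2 * (a * b) * ⟪x, y⟫ + b ^ 2 * ‖y‖ ^ 2 := by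
  rw [norm_add_sq_real, norm_smul, norm_smul, real_inner_smul_left, real_inner_smul_right,
    Real.norm_eq_abs, Real.norm_eq_abs, mul_pow, mul_pow, sq_abs, sq_abs]
  ring

theorem one_add_mul_norm_mAdd_sq (κ : ℝ) (x y : E) (hD : mAddDenom κ x y ≠ 0) :
    1 + κ * ‖mAdd κ x y‖ ^ 2 = (1 + κ * ‖x‖ ^ 2) * (1 + κ * ‖y‖ ^ 2) / mAddDenom κ x y := by
  rw [mAdd, norm_smul, mul_pow, norm_smul_add_smul_sq, Real.norm_eq_abs, sq_abs, ← mAddDenom,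
    eq_div_iff hD]
  field_simp
  unfold mAddDenom
  ring

theorem mAddDenom_pos {κ : ℝ} (hκ : κ < 0) {x y : E} (hx : inBall κ x) (hy : inBall κ y) :
    0 < mAddDenom κ x y := by
  unfold inBall at hx hy
  have hinner : -(‖x‖ * ‖y‖) ≤ ⟪x, y⟫ := (abs_le.mp (abs_real_inner_le_norm x y)).1
  have hx₀ : 0 ≤ -κ * ‖x‖ ^ 2 := mul_nonneg (neg_nonneg.mpr hκ.le) (sq_nonneg _)
  have hy₀ : 0 ≤ -κ * ‖y‖ ^ 2 := mul_nonneg (neg_nonneg.mpr hκ.le) (sq_nonneg _)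
  have hsq : (-κ * (‖x‖ * ‖y‖)) ^ 2 < 1 :=
    calc (-κ * (‖x‖ * ‖y‖)) ^ 2 = (-κ * ‖x‖ ^ 2) * (-κ * ‖y‖ ^ 2) := by ring
      _ < 1 := by nlinarith
  have hprod : 0 < 1 + κ * (‖x‖ * ‖y‖) := by
    linarith [(abs_lt.mp ((sq_lt_one_iff_abs_lt_one _).mp hsq)).2]
  calc 0 < (1 + κ * (‖x‖ * ‖y‖)) ^ 2 := by positivity
    _ ≤ mAddDenom κ x y := by unfold mAddDenom; nlinarith

theorem mobius_add_mem_ball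
    (κ : ℝ) (hκ : κ < 0) (x y : E) (hx : inBall κ x) (hy : inBall κ y) :
    inBall κ (mAdd κ x y) := by
  have hD := mAddDenom_pos hκ hx hy
  unfold inBall at *
  have hfactor : 0 < 1 + κ * ‖mAdd κ x y‖ ^ 2 := by
    rw [one_add_mul_norm_mAdd_sq κ x y hD.ne']
    exact div_pos (mul_pos (by linarith) (by linarith)) hD
  linarith
end

section
/- (Möbius scalar multiplication via the tangent space at the origin, Eq. (14) of the paper.) Let κ < 0, let x ≠ 0 be a point of the Poincaré ball of curvature κ, and let r > 0. Then r ⊗κ x = exp^κ_0(r · log^κ_0(x)), where 0 denotes the origin of the ball. -/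
open Real Filter

open scoped RealInnerProductSpace

variable {E : Type*} [NormedAddCommGroup E] [InnerProductSpace ℝ E]

/-!
At the origin both maps are radial rescalings: with `c = √(-κ)`,
`log₀ x = (artanh (c‖x‖) / (c‖x‖)) • x` and `exp₀ v = (tanh (c‖v‖) / (c‖v‖)) • v`.
Hence `exp₀ (r • log₀ x)` rescales `x` by `(tanh |u| / |u|) · (u / (c‖x‖))` with
`u = r · artanh (c‖x‖)`; since `tanh u / u` is even this is `tanh u / (c‖x‖)`, the factor
defining `r ⊗κ x`.
-/

lemma Real.tanh_abs_div_abs (u : ℝ) : tanh |u| / |u| = tanh u / u := by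
  rcases abs_choice u with h | h <;> rw [h]
  rw [tanh_neg, neg_div_neg_eq]

lemma mAdd_zero_left (κ : ℝ) (y : E) : mAdd κ (0 : E) y = y := by
  simp [mAdd]

lemma lam_zero {F : Type*} [NormedAddCommGroup F] (κ : ℝ) : lam κ (0 : F) = 2 := by
  simp [lam]

lemma mSmul_eq_smul (κ r : ℝ) (x : E) :
    mSmul κ r x = (tanh (r * _root_.artanh (√(-κ) * ‖x‖)) / (√(-κ) * ‖x‖)) • x := by
  rw [mSmul]
  split_ifs with hx
  · simp [hx]
  · congr 1
    ring

lemma logMap_zero_left (κ : ℝ) (y : E) :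
    logMap κ (0 : E) y = (_root_.artanh (√(-κ) * ‖y‖) / (√(-κ) * ‖y‖)) • y := by
  rw [logMap, neg_zero, mAdd_zero_left, lam_zero]
  congr 1
  ring

lemma expMap_zero_left (κ : ℝ) (v : E) :
    expMap κ (0 : E) v = (tanh (√(-κ) * ‖v‖) / (√(-κ) * ‖v‖)) • v := by
  rw [expMap]
  split_ifs with hv
  · simp [hv]
  · rw [mAdd_zero_left, lam_zero]
    congr 3
    ring

theorem mobius_smul_via_tangent_at_origin_general
    (κ : ℝ) (x : E) (r : ℝ) :
    mSmul κ r x = expMap κ (0 : E) (r • logMap κ (0 : E) x) := by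
  rw [mSmul_eq_smul, logMap_zero_left, smul_smul, expMap_zero_left, smul_smul]
  set s := √(-κ) * ‖x‖
  set u := r * _root_.artanh s
  rcases eq_or_ne s 0 with hs | hs
  · simp [hs]
  have hscale : r * (_root_.artanh s / s) = u / s := by ring
  have hnorm : √(-κ) * ‖(u / s) • x‖ = |u| := by
    rw [norm_smul, norm_div, Real.norm_eq_abs, Real.norm_eq_abs,
      abs_of_nonneg (a := s) (by positivity), mul_left_comm]
    exact div_mul_cancel₀ _ hs
  rw [hscale, hnorm, tanh_abs_div_abs, ← mul_div_assoc,
    div_mul_cancel_of_imp fun hu => by rw [hu, tanh_zero]]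

theorem mobius_smul_via_tangent_at_origin
    (κ : ℝ) (hκ : κ < 0) (x : E) (hx0 : x ≠ 0) (hx : inBall κ x) (r : ℝ) (hr : 0 < r) :
    mSmul κ r x = expMap κ (0 : E) (r • logMap κ (0 : E) x) :=
  mobius_smul_via_tangent_at_origin_general κ x r
end

section
/- (The exponential map recovers translation in the flat limit, so that hyperbolic explicit Euler converges to Euclidean explicit Euler.) Fix a point x and a vector v ≠ 0 of a real inner product space. Then the map κ ↦ exp^κ_x(v) tends to x + v as κ → 0 from the left (κ → 0⁻ along negative reals). -/
open Real Filter

open scoped RealInnerProductSpace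

variable {E : Type*} [NormedAddCommGroup E] [InnerProductSpace ℝ E]

/-!
Write `c = √(-κ)`. For `v ≠ 0`, `exp^κ_x(v) = x ⊕κ (s(κ) • v)` with
`s(κ) = tanh (c λκ(x) ‖v‖ / 2) / (c ‖v‖) = (tanh a / a) · λκ(x) / 2` where `a = c λκ(x) ‖v‖ / 2`.
As `κ → 0⁻` we have `a → 0` with `a ≠ 0`, so `tanh a / a → 1`, and `λκ(x) → 2`; hence `s(κ) → 1`.
Möbius addition is jointly continuous in the curvature and both arguments wherever its
denominator is nonzero, and `⊕₀` is ordinary addition, so `exp^κ_x(v) → x + v`.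
-/

open Topology

theorem tendsto_tanh_div_self : Tendsto (fun t : ℝ => tanh t / t) (𝓝[≠] 0) (𝓝 1) := by
  have hsinh : Tendsto (fun t : ℝ => sinh t / t) (𝓝[≠] 0) (𝓝 1) := by
    have h := (hasDerivAt_sinh 0).tendsto_slope_zero
    simp only [zero_add, sinh_zero, sub_zero, cosh_zero, smul_eq_mul] at h
    simpa only [div_eq_inv_mul] using h
  have hcosh : Tendsto cosh (𝓝[≠] 0) (𝓝 1) := by
    simpa only [cosh_zero] using (continuous_cosh.tendsto 0).mono_left nhdsWithin_le_nhds
  have hquot := hsinh.div hcosh one_ne_zero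
  rw [div_one] at hquot
  refine hquot.congr fun t => ?_
  simp only [Pi.div_apply, tanh_eq_sinh_div_cosh, div_right_comm]

theorem mAdd_zero_curvature (x y : E) : mAdd 0 x y = x + y := by
  simp [mAdd]

theorem continuousAt_mAdd {p : ℝ × E × E}
    (hden : 1 - 2 * p.1 * ⟪p.2.1, p.2.2⟫ + p.1 ^ 2 * ‖p.2.1‖ ^ 2 * ‖p.2.2‖ ^ 2 ≠ 0) :
    ContinuousAt (fun q : ℝ × E × E => mAdd q.1 q.2.1 q.2.2) p := by
  have hden_cont : ContinuousAt (fun q : ℝ × E × E =>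
      1 - 2 * q.1 * ⟪q.2.1, q.2.2⟫ + q.1 ^ 2 * ‖q.2.1‖ ^ 2 * ‖q.2.2‖ ^ 2) p := by fun_prop
  have hnum_cont : ContinuousAt (fun q : ℝ × E × E =>
      (1 - 2 * q.1 * ⟪q.2.1, q.2.2⟫ - q.1 * ‖q.2.2‖ ^ 2) • q.2.1 + (1 + q.1 * ‖q.2.1‖ ^ 2) • q.2.2)
      p := by fun_prop
  exact (hden_cont.inv₀ hden).smul hnum_cont

theorem tendsto_lam_nhds_zero {F : Type*} [NormedAddCommGroup F] (x : F) :
    Tendsto (fun κ => lam κ x) (𝓝 0) (𝓝 2) := by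
  have hcont : ContinuousAt (fun κ => lam κ x) 0 := by
    unfold lam
    fun_prop (disch := simp)
  simpa [lam] using hcont.tendsto

theorem tendsto_tanh_mul_lam_div {F : Type*} [NormedAddCommGroup F] (x : F) {r : ℝ}
    (hr : r ≠ 0) :
    Tendsto (fun κ => tanh (√(-κ) * lam κ x * r / 2) / (√(-κ) * r)) (𝓝[<] 0) (𝓝 1) := by
  have hlam : Tendsto (fun κ => lam κ x) (𝓝[<] 0) (𝓝 2) :=
    (tendsto_lam_nhds_zero x).mono_left nhdsWithin_le_nhds
  have hsqrt_ne : ∀ᶠ κ in 𝓝[<] (0 : ℝ), √(-κ) ≠ 0 :=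
    eventually_nhdsWithin_of_forall fun κ hκ => (sqrt_pos.mpr (neg_pos.mpr hκ)).ne'
  have hlam_ne : ∀ᶠ κ in 𝓝[<] (0 : ℝ), lam κ x ≠ 0 := hlam.eventually_ne two_ne_zero
  have harg : Tendsto (fun κ => √(-κ) * lam κ x * r / 2) (𝓝[<] 0) (𝓝[≠] 0) := by
    refine tendsto_nhdsWithin_iff.mpr ⟨?_, ?_⟩
    · have hsqrt : Tendsto (fun κ : ℝ => √(-κ)) (𝓝[<] 0) (𝓝 0) := by
        simpa using (continuous_neg.sqrt.tendsto 0).mono_left nhdsWithin_le_nhds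
      simpa using ((hsqrt.mul hlam).mul_const r).div_const 2
    · filter_upwards [hsqrt_ne, hlam_ne] with κ hs hl
      simp [hs, hl, hr]
  have hprod := (tendsto_tanh_div_self.comp harg).mul (hlam.div_const 2)
  rw [div_self two_ne_zero, one_mul] at hprod
  refine hprod.congr' ?_
  filter_upwards [hsqrt_ne, hlam_ne] with κ hs hl
  simp only [Function.comp_apply]
  field_simp

theorem expMap_flat_limit (x v : E) (hv : v ≠ 0) :
    Tendsto (fun κ : ℝ => expMap κ x v) (nhdsWithin 0 (Set.Iio 0)) (nhds (x + v)) := by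
  have hκ : Tendsto (fun κ : ℝ => κ) (𝓝[<] 0) (𝓝 0) := nhdsWithin_le_nhds
  have hcoeff := (tendsto_tanh_mul_lam_div x (norm_ne_zero_iff.mpr hv)).smul_const v
  rw [one_smul] at hcoeff
  have hlim := (continuousAt_mAdd (p := (0, x, v)) (by simp)).tendsto.comp
    (hκ.prodMk_nhds (tendsto_const_nhds.prodMk_nhds hcoeff))
  simpa [expMap, hv, mAdd_zero_curvature, Function.comp_def] using hlim
end

section
/- (The logarithmic map recovers the Euclidean gradient/difference in the flat limit.) Fix points x ≠ y of a real inner product space. Then the map κ ↦ log^κ_x(y) tends to y − x as κ → 0 from the left (κ → 0⁻ along negative reals). -/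
open Real Filter

open scoped RealInnerProductSpace

variable {E : Type*} [NormedAddCommGroup E] [InnerProductSpace ℝ E]

/-! As `κ → 0⁻`, Möbius addition tends to vector addition and the conformal factor to `2`.
With `c = √(-κ)` and `m = (-x) ⊕κ y`, the logarithmic map is `(2 / λκ(x)) · q(c‖m‖) • m`, where
`q = dslope artanh 0` is the difference quotient `artanh t / t` extended continuously by
`artanh' 0 = 1`. Since `c‖m‖ → 0`, the limit is `1 · 1 • (y - x)`. -/

lemma hasDerivAt_artanh_zero : HasDerivAt _root_.artanh 1 0 := by
  have hquot : HasDerivAt (fun t : ℝ => (1 + t) / (1 - t)) 2 0 :=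
    (((hasDerivAt_id' 0).const_add 1).div ((hasDerivAt_id' 0).const_sub 1)
      (by norm_num)).congr_deriv (by norm_num)
  exact ((hquot.log (by norm_num)).const_mul (1 / 2 : ℝ)).congr_deriv (by norm_num)

lemma tendsto_dslope_artanh_zero : Tendsto (dslope _root_.artanh 0) (nhds 0) (nhds 1) := by
  have hcont : ContinuousAt (dslope _root_.artanh 0) 0 :=
    continuousAt_dslope_same.mpr hasDerivAt_artanh_zero.differentiableAt
  simpa [dslope_same, hasDerivAt_artanh_zero.deriv] using hcont.tendsto

lemma tendsto_mAdd_flat (x y : E) :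
    Tendsto (fun κ : ℝ => mAdd κ x y) (nhds 0) (nhds (x + y)) := by
  have : ContinuousAt (fun κ : ℝ => mAdd κ x y) 0 := by
    unfold mAdd
    fun_prop (disch := norm_num)
  simpa [mAdd] using this.tendsto

lemma tendsto_lam_flat {F : Type*} [NormedAddCommGroup F] (x : F) :
    Tendsto (fun κ : ℝ => lam κ x) (nhds 0) (nhds 2) := by
  have : ContinuousAt (fun κ : ℝ => lam κ x) 0 := by
    unfold lam
    fun_prop (disch := norm_num)
  simpa [lam] using this.tendsto

lemma logMap_eq_dslope_artanh_smul {κ : ℝ} (hκ : κ < 0) (x y : E) :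
    logMap κ x y = (2 / lam κ x * dslope _root_.artanh 0 (√(-κ) * ‖mAdd κ (-x) y‖)) •
      mAdd κ (-x) y := by
  rcases eq_or_ne (mAdd κ (-x) y) 0 with hm | hm
  · simp [logMap, hm]
  have hc : √(-κ) ≠ 0 := Real.sqrt_ne_zero'.mpr (neg_pos.mpr hκ)
  have hcm : √(-κ) * ‖mAdd κ (-x) y‖ ≠ 0 := mul_ne_zero hc (norm_ne_zero_iff.mpr hm)
  rw [logMap, dslope_of_ne _ hcm, slope_def_field, show _root_.artanh 0 = 0 by simp [_root_.artanh], sub_zero, sub_zero]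
  congr 1
  field_simp

theorem logMap_flat_limit_general (x y : E) :
    Tendsto (fun κ : ℝ => logMap κ x y) (nhdsWithin 0 (Set.Iio 0)) (nhds (y - x)) := by
  have hm : Tendsto (fun κ : ℝ => mAdd κ (-x) y) (nhdsWithin 0 (Set.Iio 0)) (nhds (y - x)) := by
    simpa [neg_add_eq_sub] using (tendsto_mAdd_flat (-x) y).mono_left nhdsWithin_le_nhds
  have hsqrt : Tendsto (fun κ : ℝ => √(-κ)) (nhdsWithin 0 (Set.Iio 0)) (nhds 0) := by
    have : ContinuousAt (fun κ : ℝ => √(-κ)) 0 := by fun_prop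
    simpa using this.tendsto.mono_left nhdsWithin_le_nhds
  have hslope : Tendsto (fun κ : ℝ => dslope _root_.artanh 0 (√(-κ) * ‖mAdd κ (-x) y‖))
      (nhdsWithin 0 (Set.Iio 0)) (nhds 1) := by
    exact tendsto_dslope_artanh_zero.comp (by simpa using hsqrt.mul hm.norm)
  have hlam := (tendsto_lam_flat x).mono_left (nhdsWithin_le_nhds (s := Set.Iio 0))
  refine Tendsto.congr' (eventually_nhdsWithin_of_forall fun κ hκ =>
    (logMap_eq_dslope_artanh_smul hκ x y).symm) ?_
  simpa using (((tendsto_const_nhds (x := (2 : ℝ))).div hlam two_ne_zero).mul hslope).smul hm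

theorem logMap_flat_limit (x y : E) (hxy : x ≠ y) :
    Tendsto (fun κ : ℝ => logMap κ x y) (nhdsWithin 0 (Set.Iio 0)) (nhds (y - x)) :=
  logMap_flat_limit_general x y
end
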